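/- Nikolskii-type inequality (q<p): Let λ>1, a>0, b∈ℝ and 1≤q<p≤∞. There exists a constant C>0 such that for every m∈ℕ and every polynomial φ of degree at most m, ‖φ‖_{L_{q,w}(ℝ)} ≤ C·m^{(1/λ)(1/q−1/p)}·‖φ‖_{L_{p,w}(ℝ)}. -/

import Mathlib

open MeasureTheory Filter
open scoped ENNReal BigOperators NNReal

noncomputable section

/-- Univariate Freud weight `w(x) = exp(-a * |x|^λ + b)`. -/
def fw (lam a b : ℝ) (x : ℝ) : ℝ := Real.exp (-a * |x| ^ lam + b)

/-- Tensor-product Freud weight on `ι → ℝ`. -/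
def fwP (lam a b : ℝ) {ι : Type*} [Fintype ι] (x : ι → ℝ) : ℝ := ∏ i, fw lam a b (x i)

/-- Weighted `L_p` norm (extended-real valued): `‖f·w‖_p` with respect to `μ`. -/
def wnorm {α : Type*} [MeasurableSpace α] (μ : Measure α) (p : ℝ≥0∞) (w f : α → ℝ) : ℝ≥0∞ :=
  eLpNorm (fun x => f x * w x) p μ

/-- `r_λ = (1 - 1/λ) r`. -/
def rlam (lam : ℝ) (r : ℕ) : ℝ := (1 - 1 / lam) * r

/-- `δ_{λ,p,q}`.  (Recall that for `p = ∞` one has `p.toReal = 0` and `1/0 = 0` in Lean,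
which agrees with the convention `1/∞ = 0`.) -/
def dlt (lam : ℝ) (p q : ℝ≥0∞) : ℝ :=
  if p ≤ q then (1 - 1 / lam) * (1 / p.toReal - 1 / q.toReal)
  else (1 / lam) * (1 / q.toReal - 1 / p.toReal)

/-- `r_{λ,p,q} = r_λ - δ_{λ,p,q}`. -/
def rlampq (lam : ℝ) (r : ℕ) (p q : ℝ≥0∞) : ℝ := rlam lam r - dlt lam p q

/-- `g` is the `k`-th weak derivative of `f` on `ℝ`. -/
def HasWeakDeriv (k : ℕ) (f g : ℝ → ℝ) : Prop :=
  ∀ φ : ℝ → ℝ, (∀ n : ℕ, ContDiff ℝ n φ) → HasCompactSupport φ →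
    ∫ x, f x * iteratedDeriv k φ x = (-1 : ℝ) ^ k * ∫ x, g x * φ x

/-- `D` is a family of weak derivatives of `f = D 0` up to order `r`, all lying
    in the weighted `L_p` space: a representative of `f ∈ W^r_{p,w}(ℝ)`. -/
def IsSobRep1 (lam a b : ℝ) (p : ℝ≥0∞) (r : ℕ) (f : ℝ → ℝ) (D : ℕ → ℝ → ℝ) : Prop :=
  D 0 = f ∧ ∀ k : ℕ, k ≤ r →
    HasWeakDeriv k f (D k) ∧ wnorm volume p (fw lam a b) (D k) < ⊤

/-- The norm of `W^r_{p,w}(ℝ)` computed from a representative family of weak derivatives. -/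
def sobNorm1 (lam a b : ℝ) (p : ℝ≥0∞) (r : ℕ) (D : ℕ → ℝ → ℝ) : ℝ≥0∞ :=
  if p = ∞ then ⨆ k : Fin (r + 1), wnorm volume ∞ (fw lam a b) (D k)
  else (∑ k ∈ Finset.range (r + 1),
      wnorm volume p (fw lam a b) (D k) ^ p.toReal) ^ (1 / p.toReal)

/-- The unit ball of `W^r_{p,w}(ℝ)`. -/
def sobBall1 (lam a b : ℝ) (p : ℝ≥0∞) (r : ℕ) : Set (ℝ → ℝ) :=
  {f | ∃ D, IsSobRep1 lam a b p r f D ∧ sobNorm1 lam a b p r D ≤ 1}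

/-- `P` is the sequence of orthonormal polynomials w.r.t. the weight `w² = exp(-2a|x|^λ+2b)`:
`P k` has degree `k`, positive leading coefficient, and `∫ P j P k w² = δ_{jk}`. -/
def IsONPoly (lam a b : ℝ) (P : ℕ → Polynomial ℝ) : Prop :=
  (∀ k : ℕ, (P k).degree = (k : WithBot ℕ)) ∧ (∀ k : ℕ, 0 < (P k).leadingCoeff) ∧
    ∀ j k : ℕ, (∫ x : ℝ, (P j).eval x * (P k).eval x * fw lam a b x ^ 2) =
      if j = k then (1 : ℝ) else 0

/-- Fourier coefficient `f̂(k) = ∫ f p_k w²`. -/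
def fc (lam a b : ℝ) (P : ℕ → Polynomial ℝ) (f : ℝ → ℝ) (k : ℕ) : ℝ :=
  ∫ x : ℝ, f x * (P k).eval x * fw lam a b x ^ 2

/-- Fourier partial sum `S_m f = ∑_{k<m} f̂(k) p_k`. -/
def Sop (lam a b : ℝ) (P : ℕ → Polynomial ℝ) (m : ℕ) (f : ℝ → ℝ) : ℝ → ℝ :=
  fun x => ∑ k ∈ Finset.range m, fc lam a b P f k * (P k).eval x

/-- de la Vallée Poussin sum `V_m f = (1/m) ∑_{k=m+1}^{2m} S_k f`. -/
def Vop (lam a b : ℝ) (P : ℕ → Polynomial ℝ) (m : ℕ) (f : ℝ → ℝ) : ℝ → ℝ :=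
  fun x => (1 / (m : ℝ)) * ∑ j ∈ Finset.Icc (m + 1) (2 * m), Sop lam a b P j f x

/-- `v_{m,0} = V_m`, `v_{m,k} = V_{m 2^k} - V_{m 2^{k-1}}` for `k ≥ 1`. -/
def vop (lam a b : ℝ) (P : ℕ → Polynomial ℝ) (m k : ℕ) (f : ℝ → ℝ) : ℝ → ℝ :=
  if k = 0 then Vop lam a b P m f
  else fun x => Vop lam a b P (m * 2 ^ k) f x - Vop lam a b P (m * 2 ^ (k - 1)) f x

/-- `s_{m,0} = S_m`, `s_{m,k} = S_{m 2^k} - S_{m 2^{k-1}}` for `k ≥ 1`. -/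
def sop (lam a b : ℝ) (P : ℕ → Polynomial ℝ) (m k : ℕ) (f : ℝ → ℝ) : ℝ → ℝ :=
  if k = 0 then Sop lam a b P m f
  else fun x => Sop lam a b P (m * 2 ^ k) f x - Sop lam a b P (m * 2 ^ (k - 1)) f x

/-! ### Multivariate notions -/

/-- Partial derivative in the `i`-th variable. -/
def pd {ι : Type*} [Fintype ι] [DecidableEq ι] (i : ι) (f : (ι → ℝ) → ℝ) : (ι → ℝ) → ℝ :=
  fun x => deriv (fun t => f (Function.update x i t)) (x i)

/-- Iterated mixed partial derivative `D^k`, `k` a multi-index. -/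
def pdMulti {ι : Type*} [Fintype ι] [DecidableEq ι] (k : ι → ℕ) (f : (ι → ℝ) → ℝ) :
    (ι → ℝ) → ℝ :=
  (Finset.univ.toList.map fun i : ι => (pd i)^[k i]).foldl (fun g F => F g) f

/-- `g` is the weak mixed partial derivative `D^k f` of `f` on `ι → ℝ`. -/
def HasWeakPDeriv {ι : Type*} [Fintype ι] [DecidableEq ι] (k : ι → ℕ)
    (f g : (ι → ℝ) → ℝ) : Prop :=
  ∀ φ : (ι → ℝ) → ℝ, (∀ n : ℕ, ContDiff ℝ n φ) → HasCompactSupport φ →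
    ∫ x, f x * pdMulti k φ x = (-1 : ℝ) ^ (∑ i, k i) * ∫ x, g x * φ x

/-- `D` is a family of weak partial derivatives of `f = D 0` for all multi-indices
`k` with `|k|_∞ ≤ r`, all lying in weighted `L_p`: a representative of
`f ∈ W^r_{p,w}(ℝ^d)` (mixed smoothness `r`). -/
def IsSobRep (lam a b : ℝ) {d : ℕ} (p : ℝ≥0∞) (r : ℕ)
    (f : (Fin d → ℝ) → ℝ) (D : (Fin d → ℕ) → (Fin d → ℝ) → ℝ) : Prop :=
  D 0 = f ∧ ∀ k : Fin d → ℕ, (∀ i, k i ≤ r) →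
    HasWeakPDeriv k f (D k) ∧ wnorm volume p (fwP lam a b) (D k) < ⊤

/-- The norm of `W^r_{p,w}(ℝ^d)` computed from a representative family. -/
def sobNorm (lam a b : ℝ) {d : ℕ} (p : ℝ≥0∞) (r : ℕ)
    (D : (Fin d → ℕ) → (Fin d → ℝ) → ℝ) : ℝ≥0∞ :=
  if p = ∞ then ⨆ k : Fin d → Fin (r + 1),
      wnorm volume ∞ (fwP lam a b) (D fun i => (k i : ℕ))
  else (∑ k : Fin d → Fin (r + 1),
      wnorm volume p (fwP lam a b) (D fun i => (k i : ℕ)) ^ p.toReal) ^ (1 / p.toReal)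

/-- The unit ball of `W^r_{p,w}(ℝ^d)`. -/
def sobBall (lam a b : ℝ) (d : ℕ) (p : ℝ≥0∞) (r : ℕ) : Set ((Fin d → ℝ) → ℝ) :=
  {f | ∃ D, IsSobRep lam a b p r f D ∧ sobNorm lam a b p r D ≤ 1}

/-- Apply a univariate operator `T` in the `i`-th variable. -/
def applyVar {ι : Type*} [Fintype ι] [DecidableEq ι] (i : ι)
    (T : (ℝ → ℝ) → ℝ → ℝ) (f : (ι → ℝ) → ℝ) : (ι → ℝ) → ℝ :=
  fun x => T (fun t => f (Function.update x i t)) (x i)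

/-- Tensor product of univariate operators, applied successively coordinate-wise. -/
def tensorOp {ι : Type*} [Fintype ι] [DecidableEq ι]
    (T : ι → (ℝ → ℝ) → ℝ → ℝ) (f : (ι → ℝ) → ℝ) : (ι → ℝ) → ℝ :=
  (Finset.univ.toList.map fun i : ι => applyVar i (T i)).foldl (fun g F => F g) f

/-- Univariate `E_k f = f - V_{2^k} f`. -/
def Eop (lam a b : ℝ) (P : ℕ → Polynomial ℝ) (k : ℕ) (f : ℝ → ℝ) : ℝ → ℝ :=
  fun x => f x - Vop lam a b P (2 ^ k) f x

/-- Multivariate `E_𝐤 = ⊗ E_{k_i}`. -/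
def EopD (lam a b : ℝ) (P : ℕ → Polynomial ℝ) {d : ℕ} (k : Fin d → ℕ) :
    ((Fin d → ℝ) → ℝ) → (Fin d → ℝ) → ℝ :=
  tensorOp fun i => Eop lam a b P (k i)

/-- Multivariate `v_𝐤 = ⊗ v_{k_i}` (with `v_0 = V_1`, `v_k = V_{2^k} - V_{2^{k-1}}`). -/
def vopD (lam a b : ℝ) (P : ℕ → Polynomial ℝ) {d : ℕ} (k : Fin d → ℕ) :
    ((Fin d → ℝ) → ℝ) → (Fin d → ℝ) → ℝ :=
  tensorOp fun i => vop lam a b P 1 (k i)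

/-- Multivariate `s_𝐤 = ⊗ s_{k_i}` (with `s_0 = S_1`, `s_k = S_{2^k} - S_{2^{k-1}}`). -/
def sopD (lam a b : ℝ) (P : ℕ → Polynomial ℝ) {d : ℕ} (k : Fin d → ℕ) :
    ((Fin d → ℝ) → ℝ) → (Fin d → ℝ) → ℝ :=
  tensorOp fun i => sop lam a b P 1 (k i)

/-- The de la Vallée Poussin hyperbolic cross operator `𝒱_ξ f = ∑_{|𝐤|₁ ≤ ξ} v_𝐤 f`. -/
def VV (lam a b : ℝ) (P : ℕ → Polynomial ℝ) (d : ℕ) (ξ : ℝ)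
    (f : (Fin d → ℝ) → ℝ) : (Fin d → ℝ) → ℝ :=
  fun x => ∑ k : Fin d → Fin (⌊ξ⌋₊ + 1),
    if ((∑ i, (k i : ℕ) : ℕ) : ℝ) ≤ ξ then vopD lam a b P (fun i => (k i : ℕ)) f x else 0

/-- The Fourier hyperbolic cross operator `𝒮_ξ f = ∑_{|𝐤|₁ ≤ ξ} s_𝐤 f`. -/
def SS (lam a b : ℝ) (P : ℕ → Polynomial ℝ) (d : ℕ) (ξ : ℝ)
    (f : (Fin d → ℝ) → ℝ) : (Fin d → ℝ) → ℝ :=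
  fun x => ∑ k : Fin d → Fin (⌊ξ⌋₊ + 1),
    if ((∑ i, (k i : ℕ) : ℕ) : ℝ) ≤ ξ then sopD lam a b P (fun i => (k i : ℕ)) f x else 0

/-- Kolmogorov `n`-width of `F` measured in the weighted `L_q` norm. -/
def kolW {α : Type*} [MeasurableSpace α] (μ : Measure α) (q : ℝ≥0∞) (w : α → ℝ)
    (n : ℕ) (F : Set (α → ℝ)) : ℝ≥0∞ :=
  ⨅ (L : Submodule ℝ (α → ℝ)) (_ : Module.rank ℝ ↥L ≤ (n : Cardinal)),
    ⨆ f ∈ F, ⨅ g ∈ L, wnorm μ q w (fun x => f x - g x)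

/-- Linear `n`-width of `F` measured in the weighted `L_q` norm. -/
def linW {α : Type*} [MeasurableSpace α] (μ : Measure α) (q : ℝ≥0∞) (w : α → ℝ)
    (n : ℕ) (F : Set (α → ℝ)) : ℝ≥0∞ :=
  ⨅ (A : (α → ℝ) →ₗ[ℝ] (α → ℝ)) (_ : Module.rank ℝ ↥(LinearMap.range A) ≤ (n : Cardinal)),
    ⨆ f ∈ F, wnorm μ q w (fun x => f x - A f x)

/-- The rank of a (not necessarily linear) operator: the dimension of (the span of) its range. -/
def rankOf {β γ : Type*} [AddCommMonoid γ] [Module ℝ γ] (T : β → γ) : Cardinal :=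
  Module.rank ℝ ↥(Submodule.span ℝ (Set.range T))

/-- `φ` is a polynomial of degree at most `m i` in the `i`-th variable. -/
def IsPolyDegLe {ι : Type*} [Fintype ι] [DecidableEq ι] (m : ι → ℕ) (φ : (ι → ℝ) → ℝ) : Prop :=
  ∃ c : (∀ i, Fin (m i + 1)) → ℝ,
    φ = fun x => ∑ s : ∀ i, Fin (m i + 1), c s * ∏ i, x i ^ (s i : ℕ)

/-- The multivariate orthonormal polynomial `p_𝐤(x) = ∏ p_{k_i}(x_i)`. -/
def pkD (P : ℕ → Polynomial ℝ) {d : ℕ} (k : Fin d → ℕ) (x : Fin d → ℝ) : ℝ :=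
  ∏ i, (P (k i)).eval (x i)

/-- Multivariate Fourier coefficient `f̂(𝐤) = ∫ f p_𝐤 w²`. -/
def fcD (lam a b : ℝ) (P : ℕ → Polynomial ℝ) {d : ℕ} (f : (Fin d → ℝ) → ℝ)
    (k : Fin d → ℕ) : ℝ :=
  ∫ x : Fin d → ℝ, f x * pkD P k x * fwP lam a b x ^ 2

/-- `ρ_{λ,r,𝐤} = ∏ (k_i + 1)^{r_λ}`. -/
def rho (lam : ℝ) (r : ℕ) {d : ℕ} (k : Fin d → ℕ) : ℝ :=
  ∏ i, ((k i : ℝ) + 1) ^ rlam lam r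

/-- The norm of the space `H^{r_λ}_w(ℝ^d)`. -/
def Hnorm (lam a b : ℝ) (P : ℕ → Polynomial ℝ) (d : ℕ) (r : ℕ)
    (f : (Fin d → ℝ) → ℝ) : ℝ≥0∞ :=
  (∑' k : Fin d → ℕ, ENNReal.ofReal ((rho lam r k * fcD lam a b P f k) ^ 2)) ^ (1 / 2 : ℝ)

/-- The unit ball of `H^{r_λ}_w(ℝ^d)` (inside `L_{2,w}(ℝ^d)`). -/
def Hball (lam a b : ℝ) (P : ℕ → Polynomial ℝ) (d : ℕ) (r : ℕ) :
    Set ((Fin d → ℝ) → ℝ) :=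
  {f | wnorm volume 2 (fwP lam a b) f < ⊤ ∧ Hnorm lam a b P d r f ≤ 1}

/-- Truncation `S*_ξ f = ∑_{ρ_{λ,r,𝐤} ≤ ξ} f̂(𝐤) p_𝐤` of the orthonormal polynomial expansion
on the hyperbolic cross `G(ξ)`. -/
def Sstar (lam a b : ℝ) (P : ℕ → Polynomial ℝ) (d : ℕ) (r : ℕ) (ξ : ℝ)
    (f : (Fin d → ℝ) → ℝ) : (Fin d → ℝ) → ℝ :=
  fun x => ∑' k : Fin d → ℕ,
    if rho lam r k ≤ ξ then fcD lam a b P f k * pkD P k x else 0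

/-!
Put `R = m^(1/λ)`, so that `w ≥ exp (-a m + b)` on `[-R, R]`, and let `M = max_{[-R,R]} |φ|`.
Lagrange interpolation at the `m + 1` equispaced nodes of `[0, R]` gives
`|φ x| ≤ K^m (1 + |x|/R)^m M` on `ℝ` and `|φ'| ≤ K^m M / R` on `[-R, R]`, with `K = 16 e`.
The derivative bound keeps `|φ| ≥ M/2` on an interval of length `K^(-m)/2`, whence
`M exp (-a m + b) ≤ 4 K^m ‖φ w‖_p`. Fed into the growth bound, this shows that the factor
`exp (-a |x|^λ)` of the weight wins beyond `|x| = D R` for a constant `D`: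
there `|φ w| x ≤ 4 ‖φ w‖_p exp (-|x|)`. Hölder's inequality on `[-D R, D R]` contributes the factor
`(2 D R)^(1/q - 1/p) ≤ 2 D m^((1/λ)(1/q - 1/p))`, and the tail only `8 ‖φ w‖_p`.
-/

section Factorial

open Finset
open scoped Nat

lemma factorial_le_two_pow_mul {m i : ℕ} (hi : i ≤ m) : m ! ≤ 2 ^ m * (i ! * (m - i)!) := by
  rw [← Nat.choose_mul_factorial_mul_factorial hi, mul_assoc]
  exact Nat.mul_le_mul_right _ (Nat.choose_le_two_pow m i)

lemma prod_erase_range_abs_sub {m i : ℕ} (hi : i ≤ m) :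
    ∏ j ∈ (range (m + 1)).erase i, |(i : ℝ) - j| = i ! * (m - i)! := by
  have hsplit : (range (m + 1)).erase i = range i ∪ Ico (i + 1) (m + 1) := by
    ext j; simp only [mem_erase, mem_range, mem_union, mem_Ico]; omega
  have hdisj : Disjoint (range i) (Ico (i + 1) (m + 1)) := by
    rw [Finset.disjoint_left]; intro j hj hj'; simp only [mem_range, mem_Ico] at hj hj'; omega
  have hlow : ∏ j ∈ range i, |(i : ℝ) - j| = i ! := by
    rw [← prod_range_add_one_eq_factorial, ← prod_range_reflect, Nat.cast_prod]
    refine prod_congr rfl fun j hj => ?_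
    rw [mem_range] at hj
    rw [Nat.cast_sub (by omega : j ≤ i - 1), Nat.cast_sub (by omega : 1 ≤ i)]
    rw [abs_of_nonneg (by linarith)]
    push_cast
    ring
  have hhigh : ∏ j ∈ Ico (i + 1) (m + 1), |(i : ℝ) - j| = (m - i)! := by
    rw [prod_Ico_eq_prod_range, show m + 1 - (i + 1) = m - i by omega,
      ← prod_range_add_one_eq_factorial, Nat.cast_prod]
    refine prod_congr rfl fun j _ => ?_
    rw [abs_sub_comm, abs_of_nonneg (by push_cast; linarith)]
    push_cast
    ring
  rw [hsplit, prod_union hdisj, hlow, hhigh]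

end Factorial

section LagrangeEstimates

open Polynomial Lagrange Finset Real

variable {ι : Type*} {v : ι → ℝ} {x K : ℝ}

lemma abs_eval_nodal_le {t : Finset ι} (hK : ∀ j ∈ t, |x - v j| ≤ K) :
    |(nodal t v).eval x| ≤ K ^ #t := by
  rw [eval_nodal, Finset.abs_prod, ← Finset.prod_const]
  exact Finset.prod_le_prod (fun _ _ => abs_nonneg _) hK

lemma mul_abs_eval_derivative_nodal_le [DecidableEq ι] {t : Finset ι} (hK₀ : 0 ≤ K)
    (hK : ∀ j ∈ t, |x - v j| ≤ K) :
    K * |(derivative (nodal t v)).eval x| ≤ #t * K ^ #t := by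
  rw [derivative_nodal, eval_finsetSum, ← nsmul_eq_mul, ← Finset.sum_const]
  refine (mul_le_mul_of_nonneg_left (Finset.abs_sum_le_sum_abs _ _) hK₀).trans ?_
  rw [Finset.mul_sum]
  refine Finset.sum_le_sum fun j hj => ?_
  calc K * |(nodal (t.erase j) v).eval x|
      ≤ K * K ^ #(t.erase j) :=
        mul_le_mul_of_nonneg_left
          (abs_eval_nodal_le fun i hi => hK i (Finset.mem_of_mem_erase hi)) hK₀
    _ = K ^ #t := by rw [← pow_succ', Finset.card_erase_add_one hj]

lemma basis_eq_C_nodalWeight_mul_nodal_erase [DecidableEq ι] {s : Finset ι} {i : ι}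
    (hi : i ∈ s) : Lagrange.basis s v i = C (nodalWeight s v i) * nodal (s.erase i) v := by
  rw [basis_eq_prod_sub_inv_mul_nodal_div hi, nodal_erase_eq_nodal_div hi]

lemma abs_le_sum_abs_basis [DecidableEq ι] {s : Finset ι} {p : ℝ[X]} {M : ℝ}
    (L : ℝ[X] →ₗ[ℝ] ℝ) (hvs : Set.InjOn v s) (hp : p.degree < #s)
    (hM : ∀ i ∈ s, |p.eval (v i)| ≤ M) :
    |L p| ≤ M * ∑ i ∈ s, |L (Lagrange.basis s v i)| := by
  conv_lhs => rw [eq_interpolate hvs hp, interpolate_apply]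
  simp only [map_sum, ← smul_eq_C_mul, map_smul, smul_eq_mul, Finset.mul_sum]
  refine (Finset.abs_sum_le_sum_abs _ _).trans (Finset.sum_le_sum fun i hi => ?_)
  rw [abs_mul]
  exact mul_le_mul_of_nonneg_right (hM i hi) (abs_nonneg _)

def uniformNode (m : ℕ) (R : ℝ) (j : ℕ) : ℝ := R * j / m

lemma uniformNode_mem_Icc {m j : ℕ} {R : ℝ} (hR : 0 ≤ R) (hj : j ∈ range (m + 1)) :
    uniformNode m R j ∈ Set.Icc 0 R := by
  rcases Nat.eq_zero_or_pos m with rfl | hm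
  · simp [uniformNode, hR]
  have hjm : (j : ℝ) ≤ m := by exact_mod_cast Nat.lt_succ_iff.mp (mem_range.mp hj)
  refine ⟨by unfold uniformNode; positivity, ?_⟩
  rw [uniformNode, div_le_iff₀ (by exact_mod_cast hm)]
  exact mul_le_mul_of_nonneg_left hjm hR

lemma abs_sub_uniformNode_le {m j : ℕ} {R : ℝ} (hR : 0 ≤ R) (hj : j ∈ range (m + 1)) (x : ℝ) :
    |x - uniformNode m R j| ≤ |x| + R := by
  have hj' := uniformNode_mem_Icc hR hj
  exact (abs_sub _ _).trans (by rw [abs_of_nonneg hj'.1]; linarith [hj'.2])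

lemma card_erase_range_succ {m i : ℕ} (hi : i ∈ range (m + 1)) :
    #((range (m + 1)).erase i) = m := by
  rw [card_erase_of_mem hi, card_range, Nat.add_sub_cancel]

lemma injOn_uniformNode {m : ℕ} {R : ℝ} (hR : R ≠ 0) :
    Set.InjOn (uniformNode m R) (range (m + 1)) := by
  intro i hi j hj hij
  rcases Nat.eq_zero_or_pos m with rfl | hm
  · simp only [zero_add, coe_range, Set.mem_Iio, Nat.lt_one_iff] at hi hj
    rw [hi, hj]
  simp only [uniformNode] at hij
  field_simp at hij
  exact_mod_cast hij

lemma abs_nodalWeight_uniformNode_le {m i : ℕ} {R : ℝ} (hR : 0 < R) (hi : i ∈ range (m + 1)) :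
    |nodalWeight (range (m + 1)) (uniformNode m R) i| ≤ (2 * exp 1 / R) ^ m := by
  have him : i ≤ m := Nat.lt_succ_iff.mp (mem_range.mp hi)
  rcases Nat.eq_zero_or_pos m with rfl | hm
  · simp [nodalWeight, Nat.le_zero.mp him]
  have hm₀ : (0 : ℝ) < m := by exact_mod_cast hm
  have hprod : ∏ j ∈ (range (m + 1)).erase i, |uniformNode m R i - uniformNode m R j|
      = (R / m) ^ m * (i.factorial * (m - i).factorial : ℝ) := by
    calc ∏ j ∈ (range (m + 1)).erase i, |uniformNode m R i - uniformNode m R j|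
        = ∏ j ∈ (range (m + 1)).erase i, R / m * |(i : ℝ) - j| := by
          refine prod_congr rfl fun j _ => ?_
          rw [uniformNode, uniformNode, ← sub_div, ← mul_sub, mul_div_right_comm, abs_mul,
            abs_of_pos (by positivity)]
      _ = (R / m) ^ m * (i.factorial * (m - i).factorial : ℝ) := by
          rw [prod_mul_distrib, prod_const, card_erase_range_succ hi, prod_erase_range_abs_sub him]
  have hfact : (m : ℝ) ^ m / (2 * exp 1) ^ m ≤ (i.factorial * (m - i).factorial : ℝ) := by
    have h₁ : (m : ℝ) ^ m / m.factorial ≤ exp m := pow_div_factorial_le_exp _ hm₀.le m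
    have h₂ : (m.factorial : ℝ) ≤ 2 ^ m * (i.factorial * (m - i).factorial) := by
      exact_mod_cast factorial_le_two_pow_mul him
    rw [← Real.exp_one_pow, div_le_iff₀ (by positivity)] at h₁
    rw [mul_pow, div_le_iff₀ (by positivity)]
    nlinarith [pow_pos (exp_pos 1) m]
  have hlower : (R / (2 * exp 1)) ^ m ≤
      ∏ j ∈ (range (m + 1)).erase i, |uniformNode m R i - uniformNode m R j| := by
    rw [hprod]
    calc (R / (2 * exp 1)) ^ m = (R / m) ^ m * ((m : ℝ) ^ m / (2 * exp 1) ^ m) := by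
          rw [← mul_div_assoc, ← mul_pow, div_mul_cancel₀ _ hm₀.ne', div_pow]
      _ ≤ _ := mul_le_mul_of_nonneg_left hfact (by positivity)
  rw [nodalWeight, abs_prod]
  simp only [abs_inv]
  rw [prod_inv_distrib, ← inv_div, inv_pow]
  exact inv_anti₀ (by positivity) hlower

lemma abs_eval_basis_uniformNode_le {m i : ℕ} {R : ℝ} (hR : 0 < R) (hi : i ∈ range (m + 1))
    (x : ℝ) :
    |(Lagrange.basis (range (m + 1)) (uniformNode m R) i).eval x| ≤
      (2 * exp 1) ^ m * (1 + |x| / R) ^ m := by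
  have hnodal : |(nodal ((range (m + 1)).erase i) (uniformNode m R)).eval x| ≤ (|x| + R) ^ m :=
    (abs_eval_nodal_le fun j hj => abs_sub_uniformNode_le hR.le (mem_of_mem_erase hj) x).trans_eq
      (by rw [card_erase_range_succ hi])
  rw [basis_eq_C_nodalWeight_mul_nodal_erase hi, eval_mul, eval_C, abs_mul]
  calc _ ≤ (2 * exp 1 / R) ^ m * (|x| + R) ^ m :=
        mul_le_mul (abs_nodalWeight_uniformNode_le hR hi)
          hnodal (abs_nonneg _) (by positivity)
    _ = (2 * exp 1) ^ m * (1 + |x| / R) ^ m := by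
        rw [← mul_pow, ← mul_pow]
        congr 1
        field_simp
        ring

lemma two_mul_mul_abs_eval_derivative_basis_uniformNode_le {m i : ℕ} {R x : ℝ} (hR : 0 < R)
    (hi : i ∈ range (m + 1)) (hx : |x| ≤ R) :
    2 * R * |(derivative (Lagrange.basis (range (m + 1)) (uniformNode m R) i)).eval x| ≤
      m * (4 * exp 1) ^ m := by
  have hnodal : 2 * R * |(derivative (nodal ((range (m + 1)).erase i) (uniformNode m R))).eval x|
      ≤ m * (2 * R) ^ m := by
    refine (mul_abs_eval_derivative_nodal_le (by positivity) fun j hj => ?_).trans_eq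
      (by rw [card_erase_range_succ hi])
    linarith [abs_sub_uniformNode_le hR.le (mem_of_mem_erase hj) x]
  rw [basis_eq_C_nodalWeight_mul_nodal_erase hi, derivative_C_mul, eval_mul, eval_C, abs_mul,
    mul_left_comm]
  calc _ ≤ (2 * exp 1 / R) ^ m * (m * (2 * R) ^ m) :=
        mul_le_mul (abs_nodalWeight_uniformNode_le hR hi)
          hnodal (by positivity) (by positivity)
    _ = m * (4 * exp 1) ^ m := by
        rw [mul_left_comm, ← mul_pow]
        congr 2
        field_simp
        ring

lemma natCast_add_one_le_two_pow (m : ℕ) : (m : ℝ) + 1 ≤ 2 ^ m := by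
  exact_mod_cast Nat.lt_two_pow_self

lemma abs_le_sum_abs_basis_uniformNode {φ : ℝ[X]} {m : ℕ} {R M : ℝ} (hR : 0 < R)
    (hφ : φ.natDegree ≤ m) (hM : ∀ y ∈ Set.Icc 0 R, |φ.eval y| ≤ M) (L : ℝ[X] →ₗ[ℝ] ℝ) :
    |L φ| ≤ M * ∑ i ∈ range (m + 1), |L (Lagrange.basis (range (m + 1)) (uniformNode m R) i)| := by
  refine abs_le_sum_abs_basis L (injOn_uniformNode hR.ne') ?_ fun i hi =>
    hM _ (uniformNode_mem_Icc hR.le hi)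
  rw [card_range]
  exact degree_le_natDegree.trans_lt (by exact_mod_cast Nat.lt_succ_of_le hφ)

lemma abs_eval_le_of_forall_abs_eval_le {φ : ℝ[X]} {m : ℕ} {R M : ℝ} (hR : 0 < R)
    (hφ : φ.natDegree ≤ m) (hM : ∀ y ∈ Set.Icc 0 R, |φ.eval y| ≤ M) (x : ℝ) :
    |φ.eval x| ≤ (16 * exp 1) ^ m * (1 + |x| / R) ^ m * M := by
  have hM₀ : 0 ≤ M := (abs_nonneg _).trans (hM 0 ⟨le_rfl, hR.le⟩)
  have hsum := abs_le_sum_abs_basis_uniformNode hR hφ hM (leval x)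
  simp only [leval_apply] at hsum
  calc |φ.eval x|
      ≤ M * ∑ _i ∈ range (m + 1), (2 * exp 1) ^ m * (1 + |x| / R) ^ m :=
        hsum.trans (mul_le_mul_of_nonneg_left
          (sum_le_sum fun i hi => abs_eval_basis_uniformNode_le hR hi x) hM₀)
    _ = ((m + 1) * (2 * exp 1) ^ m) * (1 + |x| / R) ^ m * M := by
        rw [sum_const, card_range, nsmul_eq_mul]; push_cast; ring
    _ ≤ (16 * exp 1) ^ m * (1 + |x| / R) ^ m * M := by
        gcongr
        calc ((m : ℝ) + 1) * (2 * exp 1) ^ m ≤ 8 ^ m * (2 * exp 1) ^ m := by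
              gcongr
              exact (natCast_add_one_le_two_pow m).trans
                (pow_le_pow_left₀ (by norm_num) (by norm_num) m)
          _ = (16 * exp 1) ^ m := by rw [← mul_pow]; ring

lemma abs_eval_derivative_le_of_forall_abs_eval_le {φ : ℝ[X]} {m : ℕ} {R M x : ℝ} (hR : 0 < R)
    (hφ : φ.natDegree ≤ m) (hM : ∀ y ∈ Set.Icc 0 R, |φ.eval y| ≤ M) (hx : |x| ≤ R) :
    |(derivative φ).eval x| ≤ (16 * exp 1) ^ m * M / R := by
  have hM₀ : 0 ≤ M := (abs_nonneg _).trans (hM 0 ⟨le_rfl, hR.le⟩)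
  have hsum := abs_le_sum_abs_basis_uniformNode hR hφ hM ((leval x).comp derivative)
  simp only [LinearMap.comp_apply, leval_apply] at hsum
  rw [le_div_iff₀ hR]
  calc |(derivative φ).eval x| * R
      ≤ M * ∑ i ∈ range (m + 1),
          |(derivative (Lagrange.basis (range (m + 1)) (uniformNode m R) i)).eval x| * R := by
        rw [← sum_mul, ← mul_assoc]
        exact mul_le_mul_of_nonneg_right hsum hR.le
    _ ≤ M * ∑ _i ∈ range (m + 1), m * (4 * exp 1) ^ m / 2 := by
        gcongr with i hi
        linarith [two_mul_mul_abs_eval_derivative_basis_uniformNode_le hR hi hx]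
    _ = (m + 1) * m / 2 * (4 * exp 1) ^ m * M := by
        rw [sum_const, card_range, nsmul_eq_mul]; push_cast; ring
    _ ≤ (16 * exp 1) ^ m * M := by
        gcongr
        calc ((m : ℝ) + 1) * m / 2 * (4 * exp 1) ^ m ≤ (2 ^ m * 2 ^ m) * (4 * exp 1) ^ m := by
              have h := natCast_add_one_le_two_pow m
              gcongr
              nlinarith [pow_pos (two_pos (α := ℝ)) m]
          _ = (16 * exp 1) ^ m := by rw [← mul_pow, ← mul_pow]; ring

end LagrangeEstimates

section RealEstimates

open Real

lemma exists_Icc_subset_forall_sub_mul_le_abs {f : ℝ → ℝ} {R L δ x₀ : ℝ}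
    (hf : ∀ x ∈ Set.Icc (-R) R, DifferentiableAt ℝ f x)
    (hf' : ∀ x ∈ Set.Icc (-R) R, |deriv f x| ≤ L) (hx₀ : x₀ ∈ Set.Icc (-R) R)
    (hδ : 0 ≤ δ) (hδR : δ ≤ 2 * R) :
    ∃ α, Set.Icc α (α + δ) ⊆ Set.Icc (-R) R ∧
      ∀ y ∈ Set.Icc α (α + δ), |f x₀| - L * δ ≤ |f y| := by
  obtain ⟨hx₀l, hx₀r⟩ := hx₀
  have hI : Set.Icc (min x₀ (R - δ)) (min x₀ (R - δ) + δ) ⊆ Set.Icc (-R) R := by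
    intro y ⟨hyl, hyr⟩
    exact ⟨le_trans (le_min hx₀l (by linarith)) hyl, by linarith [min_le_right x₀ (R - δ)]⟩
  refine ⟨min x₀ (R - δ), hI, fun y hy => ?_⟩
  have hx₀I : x₀ ∈ Set.Icc (min x₀ (R - δ)) (min x₀ (R - δ) + δ) := by
    refine ⟨min_le_left _ _, ?_⟩
    rcases min_choice x₀ (R - δ) with h | h <;> rw [h] <;> linarith
  have hmvt := (convex_Icc _ _).norm_image_sub_le_of_norm_deriv_le
    (fun x hx => hf x (hI hx)) (fun x hx => (Real.norm_eq_abs _).trans_le (hf' x (hI hx))) hx₀I hy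
  have hdist : |y - x₀| ≤ δ :=
    abs_sub_le_iff.mpr ⟨by linarith [hy.2, hx₀I.1], by linarith [hy.1, hx₀I.2]⟩
  rw [Real.norm_eq_abs, Real.norm_eq_abs] at hmvt
  have hL : 0 ≤ L := (abs_nonneg _).trans (hf' x₀ ⟨hx₀l, hx₀r⟩)
  have := abs_sub_abs_le_abs_sub (f x₀) (f y)
  rw [abs_sub_comm (f x₀)] at this
  nlinarith [mul_le_mul_of_nonneg_left hdist hL]

lemma exists_forall_log_mul_add_sub_mul_rpow_le {lam a c : ℝ} (hlam : 1 < lam) (ha : 0 < a)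
    (hc : 0 < c) : ∃ D, 1 ≤ D ∧ ∀ u, D ≤ u → log (c * u) + a - a * u ^ lam ≤ -u := by
  have hlarge : ∀ᶠ u in atTop, |log c| + a + 2 ≤ a * u ^ (lam - 1) :=
    ((tendsto_rpow_atTop (by linarith)).const_mul_atTop ha).eventually_ge_atTop _
  obtain ⟨D, hD⟩ := eventually_atTop.mp (hlarge.and (eventually_ge_atTop 1))
  refine ⟨max D 1, le_max_right _ _, fun u hu => ?_⟩
  obtain ⟨hlarge_u, hu₁⟩ := hD u (le_of_max_le_left hu)
  have hu₀ : 0 < u := by linarith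
  have hsplit : u ^ lam = u * u ^ (lam - 1) := by
    rw [← Real.rpow_one_add' hu₀.le (by linarith), add_sub_cancel]
  rw [log_mul hc.ne' hu₀.ne', hsplit]
  nlinarith [log_le_sub_one_of_pos hu₀, le_abs_self (log c), abs_nonneg (log c)]

end RealEstimates

section LpEstimates

open Real

lemma integrable_exp_neg_abs : Integrable fun x : ℝ => exp (-|x|) := by
  rw [← integrableOn_univ, ← Set.Iic_union_Ioi (a := (0 : ℝ))]
  refine IntegrableOn.union ?_ ?_
  · refine (integrableOn_exp_Iic 0).congr_fun (fun x hx => ?_) measurableSet_Iic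
    rw [abs_of_nonpos hx, neg_neg]
  · refine (exp_neg_integrableOn_Ioi 0 one_pos).congr_fun (fun x hx => ?_) measurableSet_Ioi
    simp [abs_of_pos (Set.mem_Ioi.mp hx)]

lemma integral_exp_neg_abs : ∫ x : ℝ, exp (-|x|) = 2 := by
  rw [integral_comp_abs (f := fun x => exp (-x)), integral_exp_neg_Ioi_zero, mul_one]

lemma eLpNorm_exp_neg_abs_le {q : ℝ≥0∞} (hq : 1 ≤ q) (hq_top : q ≠ ∞) :
    eLpNorm (fun x : ℝ => exp (-|x|)) q volume ≤ 2 := by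
  have hq₀ : q ≠ 0 := (zero_lt_one.trans_le hq).ne'
  have hq₁ : 1 ≤ q.toReal := by simpa using ENNReal.toReal_mono hq_top hq
  rw [eLpNorm_eq_lintegral_rpow_enorm_toReal hq₀ hq_top]
  have hpow : ∀ x : ℝ, ‖exp (-|x|)‖ₑ ^ q.toReal ≤ ENNReal.ofReal (exp (-|x|)) := by
    intro x
    rw [Real.enorm_eq_ofReal (exp_pos _).le, ENNReal.ofReal_rpow_of_nonneg (exp_pos _).le
      (by linarith), ← exp_mul]
    exact ENNReal.ofReal_le_ofReal (exp_le_exp.mpr (by nlinarith [abs_nonneg x]))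
  have hint : ∫⁻ x : ℝ, ‖exp (-|x|)‖ₑ ^ q.toReal ≤ 2 := by
    calc ∫⁻ x : ℝ, ‖exp (-|x|)‖ₑ ^ q.toReal
        ≤ ∫⁻ x : ℝ, ENNReal.ofReal (exp (-|x|)) := lintegral_mono hpow
      _ = 2 := by
        rw [← ofReal_integral_eq_lintegral_ofReal integrable_exp_neg_abs
          (ae_of_all _ fun x => (exp_pos _).le), integral_exp_neg_abs, ENNReal.ofReal_ofNat]
  calc (∫⁻ x : ℝ, ‖exp (-|x|)‖ₑ ^ q.toReal) ^ (1 / q.toReal)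
      ≤ 2 ^ (1 / q.toReal) := ENNReal.rpow_le_rpow hint (by positivity)
    _ ≤ 2 ^ (1 : ℝ) := ENNReal.rpow_le_rpow_of_exponent_le (by norm_num)
        (by rw [div_le_one (by linarith)]; exact hq₁)
    _ = 2 := ENNReal.rpow_one 2

lemma one_div_toReal_le_one {p : ℝ≥0∞} (hp : 1 ≤ p) : 1 / p.toReal ≤ 1 := by
  rcases eq_or_ne p ∞ with rfl | hp_top
  · simp
  · exact div_le_one_of_le₀ (by simpa using ENNReal.toReal_mono hp_top hp) ENNReal.toReal_nonneg

lemma one_div_toReal_le_one_div_toReal {p q : ℝ≥0∞} (hq : 1 ≤ q) (hqp : q ≤ p) :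
    1 / p.toReal ≤ 1 / q.toReal := by
  rcases eq_or_ne p ∞ with rfl | hp_top
  · simp
  have hq₁ : 1 ≤ q.toReal := by simpa using ENNReal.toReal_mono (ne_top_of_le_ne_top hp_top hqp) hq
  exact one_div_le_one_div_of_le (by linarith) (ENNReal.toReal_mono hp_top hqp)

lemma one_div_toReal_sub_one_div_toReal_mem_Icc {p q : ℝ≥0∞} (hq : 1 ≤ q) (hqp : q ≤ p) :
    1 / q.toReal - 1 / p.toReal ∈ Set.Icc 0 1 :=
  ⟨sub_nonneg.mpr (one_div_toReal_le_one_div_toReal hq hqp),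
    by linarith [one_div_toReal_le_one hq, one_div_nonneg.mpr (ENNReal.toReal_nonneg (a := p))]⟩

lemma ofReal_mul_le_eLpNorm_of_forall_le_abs {g : ℝ → ℝ} {p : ℝ≥0∞} {c α δ : ℝ} (hp : 1 ≤ p)
    (hδ : 0 < δ) (hδ₁ : δ ≤ 1) (hg : ∀ y ∈ Set.Icc α (α + δ), c ≤ |g y|) :
    ENNReal.ofReal (c * δ) ≤ eLpNorm g p volume := by
  rcases le_or_gt c 0 with hc | hc
  · simp [ENNReal.ofReal_eq_zero.mpr (mul_nonpos_of_nonpos_of_nonneg hc hδ.le)]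
  have hvol : volume (Set.Icc α (α + δ)) = ENNReal.ofReal δ := by
    rw [Real.volume_Icc, add_sub_cancel_left]
  have hμ : volume.restrict (Set.Icc α (α + δ)) ≠ 0 := by
    rw [Ne, Measure.restrict_eq_zero, hvol, ENNReal.ofReal_eq_zero, not_le]
    exact hδ
  calc ENNReal.ofReal (c * δ) = ENNReal.ofReal c * ENNReal.ofReal δ ^ (1 : ℝ) := by
        rw [ENNReal.rpow_one, ENNReal.ofReal_mul hc.le]
    _ ≤ ENNReal.ofReal c * ENNReal.ofReal δ ^ (1 / p.toReal) := by
        gcongr ENNReal.ofReal c * ?_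
        exact ENNReal.rpow_le_rpow_of_exponent_ge (ENNReal.ofReal_le_one.mpr hδ₁)
          (one_div_toReal_le_one hp)
    _ = eLpNorm (fun _ => c) p (volume.restrict (Set.Icc α (α + δ))) := by
        rw [eLpNorm_const _ (zero_lt_one.trans_le hp).ne' hμ, Measure.restrict_apply_univ, hvol,
          Real.enorm_eq_ofReal hc.le]
    _ ≤ eLpNorm g p (volume.restrict (Set.Icc α (α + δ))) := by
        refine eLpNorm_mono_ae (ae_restrict_of_forall_mem measurableSet_Icc fun y hy => ?_)
        rw [Real.norm_eq_abs, Real.norm_eq_abs, abs_of_pos hc]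
        exact hg y hy
    _ ≤ eLpNorm g p volume := eLpNorm_mono_measure g Measure.restrict_le_self

lemma eLpNorm_indicator_compl_Icc_le {g : ℝ → ℝ} {q : ℝ≥0∞} {T c : ℝ} (hq : 1 ≤ q)
    (hq_top : q ≠ ∞) (htail : ∀ x, T < |x| → |g x| ≤ c * exp (-|x|)) :
    eLpNorm ((Set.Icc (-T) T)ᶜ.indicator g) q volume ≤ ENNReal.ofReal (2 * c) := by
  have hc : 0 ≤ c := by
    have h := htail (|T| + 1) (by rw [abs_of_pos (by positivity)]; linarith [le_abs_self T])
    exact nonneg_of_mul_nonneg_left ((abs_nonneg _).trans h) (exp_pos _)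
  calc eLpNorm ((Set.Icc (-T) T)ᶜ.indicator g) q volume
      ≤ eLpNorm (fun x => c * exp (-|x|)) q volume := by
        refine eLpNorm_mono fun x => ?_
        rw [Real.norm_eq_abs, Real.norm_eq_abs, abs_of_nonneg (mul_nonneg hc (exp_pos _).le)]
        by_cases hx : x ∈ Set.Icc (-T) T
        · rw [Set.indicator_of_notMem (Set.notMem_compl_iff.mpr hx), abs_zero]
          exact mul_nonneg hc (exp_pos _).le
        · rw [Set.indicator_of_mem hx]
          exact htail x (not_le.mp fun h => hx (abs_le.mp h))
    _ = ENNReal.ofReal c * eLpNorm (fun x : ℝ => exp (-|x|)) q volume := by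
        rw [← Real.enorm_eq_ofReal hc, ← eLpNorm_const_smul]
        rfl
    _ ≤ ENNReal.ofReal c * 2 := by gcongr; exact eLpNorm_exp_neg_abs_le hq hq_top
    _ = ENNReal.ofReal (2 * c) := by
        rw [mul_comm, ENNReal.ofReal_mul zero_le_two, ENNReal.ofReal_ofNat]

lemma eLpNorm_le_of_abs_le_mul_exp_neg_abs {g : ℝ → ℝ} {p q : ℝ≥0∞} {T c : ℝ}
    (hg : AEStronglyMeasurable g volume) (hq : 1 ≤ q) (hq_top : q ≠ ∞) (hqp : q ≤ p)
    (hT : 0 ≤ T) (htail : ∀ x, T < |x| → |g x| ≤ c * exp (-|x|)) :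
    eLpNorm g q volume ≤ ENNReal.ofReal ((2 * T) ^ (1 / q.toReal - 1 / p.toReal)) *
      eLpNorm g p volume + ENNReal.ofReal (2 * c) := by
  set S := Set.Icc (-T) T
  have hsplit : eLpNorm g q volume ≤
      eLpNorm (S.indicator g) q volume + eLpNorm (Sᶜ.indicator g) q volume := by
    conv_lhs => rw [← Set.indicator_self_add_compl S g]
    exact eLpNorm_add_le (hg.indicator measurableSet_Icc) (hg.indicator measurableSet_Icc.compl) hq
  have hinner : eLpNorm (S.indicator g) q volume ≤
      ENNReal.ofReal ((2 * T) ^ (1 / q.toReal - 1 / p.toReal)) * eLpNorm g p volume := by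
    rw [eLpNorm_indicator_eq_eLpNorm_restrict measurableSet_Icc, mul_comm]
    refine (eLpNorm_le_eLpNorm_mul_rpow_measure_univ hqp hg.restrict).trans ?_
    rw [Measure.restrict_apply_univ, Real.volume_Icc, sub_neg_eq_add, ← two_mul,
      ENNReal.ofReal_rpow_of_nonneg (by positivity)
        (sub_nonneg.mpr (one_div_toReal_le_one_div_toReal hq hqp))]
    gcongr
    exact Measure.restrict_le_self
  exact hsplit.trans (add_le_add hinner (eLpNorm_indicator_compl_Icc_le hq hq_top htail))

end LpEstimates

section Nikolskii

open Polynomial Real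

lemma ofReal_abs_eval_mul_div_le_eLpNorm {φ : ℝ[X]} {m : ℕ} {w : ℝ → ℝ} {p : ℝ≥0∞}
    {R c x₀ : ℝ} (hφ : φ.natDegree ≤ m) (hp : 1 ≤ p) (hR : 1 ≤ R) (hx₀ : x₀ ∈ Set.Icc (-R) R)
    (hmax : ∀ x ∈ Set.Icc (-R) R, |φ.eval x| ≤ |φ.eval x₀|) (hc : 0 ≤ c)
    (hw : ∀ x ∈ Set.Icc (-R) R, c ≤ w x) :
    ENNReal.ofReal (|φ.eval x₀| * c / (4 * (16 * exp 1) ^ m)) ≤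
      eLpNorm (fun x => φ.eval x * w x) p volume := by
  set M := |φ.eval x₀|
  set K := (16 * exp 1) ^ m
  have hK : 1 ≤ K := one_le_pow₀ (by linarith [add_one_le_exp 1])
  have hR₀ : 0 < R := by linarith
  have hM : ∀ y ∈ Set.Icc 0 R, |φ.eval y| ≤ M := fun y hy => hmax y ⟨by linarith [hy.1], hy.2⟩
  obtain ⟨α, hαR, hα⟩ := exists_Icc_subset_forall_sub_mul_le_abs (f := fun x => φ.eval x)
    (L := K * M / R) (δ := 1 / (2 * K)) (fun x _ => φ.differentiableAt)
    (fun x hx => by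
      rw [Polynomial.deriv]
      exact abs_eval_derivative_le_of_forall_abs_eval_le hR₀ hφ hM (abs_le.mpr hx))
    hx₀ (by positivity) (by rw [div_le_iff₀ (by positivity)]; nlinarith)
  have hhalf : K * M / R * (1 / (2 * K)) ≤ M / 2 := by
    have hKM : 0 ≤ K * M := mul_nonneg (by positivity) (abs_nonneg _)
    rw [div_mul_div_comm, mul_one, div_le_div_iff₀ (by positivity) two_pos]
    nlinarith [mul_le_mul_of_nonneg_left hR hKM]
  have hlow : ∀ y ∈ Set.Icc α (α + 1 / (2 * K)), M / 2 * c ≤ |φ.eval y * w y| := by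
    intro y hy
    rw [abs_mul]
    exact mul_le_mul (by linarith [hα y hy]) ((hw y (hαR hy)).trans (le_abs_self _)) hc
      (abs_nonneg _)
  calc ENNReal.ofReal (M * c / (4 * K)) = ENNReal.ofReal (M / 2 * c * (1 / (2 * K))) := by
        congr 1; field_simp; ring
    _ ≤ _ := ofReal_mul_le_eLpNorm_of_forall_le_abs hp (by positivity)
        (by rw [div_le_one (by positivity)]; linarith) hlow

lemma fw_pos (lam a b x : ℝ) : 0 < fw lam a b x := exp_pos _

lemma one_le_natCast_rpow_one_div {lam : ℝ} {m : ℕ} (hlam : 0 < lam) (hm : 1 ≤ m) :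
    1 ≤ (m : ℝ) ^ (1 / lam) :=
  Real.one_le_rpow (by exact_mod_cast hm) (by positivity)

lemma natCast_rpow_one_div_rpow {lam : ℝ} (hlam : lam ≠ 0) (m : ℕ) :
    ((m : ℝ) ^ (1 / lam)) ^ lam = m := by
  rw [← Real.rpow_mul (Nat.cast_nonneg m), one_div_mul_cancel hlam, Real.rpow_one]

lemma natCast_rpow_one_div_le {lam : ℝ} {m : ℕ} (hlam : 1 ≤ lam) (hm : 1 ≤ m) :
    (m : ℝ) ^ (1 / lam) ≤ m := by
  have h := Real.rpow_le_rpow_of_exponent_le (Nat.one_le_cast.mpr hm)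
    (div_le_one_of_le₀ hlam (by linarith))
  rwa [Real.rpow_one] at h

lemma sq_pow_mul_pow_mul_exp_le_exp_neg {lam a u : ℝ} {m : ℕ} (hu : 0 < u)
    (h : log (512 * exp 1 ^ 2 * u) + a - a * u ^ lam ≤ -u) :
    ((16 * exp 1) ^ m) ^ 2 * (2 * u) ^ m * exp (m * (a - a * u ^ lam)) ≤ exp (-(m * u)) := by
  have hpow : ((16 * exp 1) ^ m) ^ 2 * (2 * u) ^ m = exp (m * log (512 * exp 1 ^ 2 * u)) := by
    rw [Real.exp_nat_mul, exp_log (by positivity), ← pow_mul, mul_comm m 2, pow_mul, ← mul_pow]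
    ring_nf
  rw [hpow, ← exp_add, exp_le_exp, ← mul_add, ← mul_neg]
  gcongr
  linarith

lemma exp_neg_mul_add_le_fw {lam a b x : ℝ} {m : ℕ} (hlam : 0 < lam) (ha : 0 ≤ a)
    (hx : x ∈ Set.Icc (-(m : ℝ) ^ (1 / lam)) ((m : ℝ) ^ (1 / lam))) :
    exp (-a * m + b) ≤ fw lam a b x := by
  have hxm : |x| ^ lam ≤ m := by
    rw [← natCast_rpow_one_div_rpow hlam.ne' m]
    exact Real.rpow_le_rpow (abs_nonneg x) (abs_le.mpr hx) hlam.le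
  exact exp_le_exp.mpr (by nlinarith)

lemma abs_eval_mul_fw_le_of_le_abs {lam a b D M N : ℝ} {m : ℕ} {φ : ℝ[X]} (hlam : 1 < lam)
    (hm : 1 ≤ m) (hφ : φ.natDegree ≤ m) (hD₁ : 1 ≤ D)
    (hD : ∀ u, D ≤ u → log (512 * exp 1 ^ 2 * u) + a - a * u ^ lam ≤ -u)
    (hM : ∀ y ∈ Set.Icc 0 ((m : ℝ) ^ (1 / lam)), |φ.eval y| ≤ M)
    (hMN : M * exp (-a * m + b) ≤ 4 * (16 * exp 1) ^ m * N) {x : ℝ}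
    (hx : D * (m : ℝ) ^ (1 / lam) ≤ |x|) :
    |φ.eval x * fw lam a b x| ≤ 4 * N * exp (-|x|) := by
  set R := (m : ℝ) ^ (1 / lam)
  set K := (16 * exp 1) ^ m
  have hR₁ : 1 ≤ R := one_le_natCast_rpow_one_div (by linarith) hm
  have hR₀ : 0 < R := by linarith
  have hRm : R ≤ m := natCast_rpow_one_div_le hlam.le hm
  set u := |x| / R
  have hDu : D ≤ u := by rwa [le_div_iff₀ hR₀]
  have hu₀ : 0 < u := by linarith
  have hxu : |x| = R * u := (mul_div_cancel₀ _ hR₀.ne').symm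
  have hM₀ : 0 ≤ M := (abs_nonneg _).trans (hM 0 ⟨le_rfl, hR₀.le⟩)
  have hN₀ : 0 ≤ N := by
    have := mul_nonneg hM₀ (exp_pos (-a * m + b)).le
    have hK : 0 < 4 * K := by positivity
    nlinarith
  have hgrowth : |φ.eval x| ≤ K * (2 * u) ^ m * M :=
    (abs_eval_le_of_forall_abs_eval_le hR₀ hφ hM x).trans (by gcongr; linarith)
  have hfw : fw lam a b x = exp (-a * m + b) * exp (m * (a - a * u ^ lam)) := by
    rw [fw, ← exp_add, hxu, Real.mul_rpow hR₀.le hu₀.le,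
      natCast_rpow_one_div_rpow (by linarith) m]
    ring_nf
  have hdecay : K ^ 2 * (2 * u) ^ m * exp (m * (a - a * u ^ lam)) ≤ exp (-|x|) :=
    (sq_pow_mul_pow_mul_exp_le_exp_neg hu₀ (hD u hDu)).trans
      (exp_le_exp.mpr (by rw [hxu]; nlinarith))
  calc |φ.eval x * fw lam a b x| = |φ.eval x| * fw lam a b x := by
        rw [abs_mul, abs_of_pos (fw_pos lam a b x)]
    _ ≤ K * (2 * u) ^ m * M * (exp (-a * m + b) * exp (m * (a - a * u ^ lam))) := by
        rw [hfw]; gcongr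
    _ = K * (2 * u) ^ m * (M * exp (-a * m + b)) * exp (m * (a - a * u ^ lam)) := by ring
    _ ≤ K * (2 * u) ^ m * (4 * K * N) * exp (m * (a - a * u ^ lam)) := by gcongr
    _ = 4 * N * (K ^ 2 * (2 * u) ^ m * exp (m * (a - a * u ^ lam))) := by ring
    _ ≤ 4 * N * exp (-|x|) := by gcongr

lemma continuous_fw {lam : ℝ} (hlam : 0 ≤ lam) (a b : ℝ) : Continuous (fw lam a b) :=
  continuous_exp.comp ((continuous_const.mul
    (continuous_abs.rpow_const fun _ => Or.inr hlam)).add continuous_const)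

lemma rpow_two_mul_mul_natCast_rpow_le {lam D e : ℝ} {m : ℕ} (hD : 1 ≤ D) (he : e ≤ 1) :
    (2 * (D * (m : ℝ) ^ (1 / lam))) ^ e ≤ 2 * D * (m : ℝ) ^ ((1 / lam) * e) := by
  rw [← mul_assoc, Real.mul_rpow (by positivity) (by positivity), ← Real.rpow_mul (by positivity)]
  gcongr
  simpa using Real.rpow_le_rpow_of_exponent_le (by linarith : (1 : ℝ) ≤ 2 * D) he

lemma wnorm_le_mul_wnorm_of_natDegree_le {lam a b D : ℝ} {p q : ℝ≥0∞} {m : ℕ} {φ : ℝ[X]}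
    (hlam : 1 < lam) (ha : 0 < a) (hq : 1 ≤ q) (hqp : q < p) (hD₁ : 1 ≤ D)
    (hD : ∀ u, D ≤ u → log (512 * exp 1 ^ 2 * u) + a - a * u ^ lam ≤ -u)
    (hm : 1 ≤ m) (hφ : φ.natDegree ≤ m) :
    wnorm volume q (fw lam a b) (fun x => φ.eval x) ≤
      ENNReal.ofReal ((2 * D + 8) * (m : ℝ) ^ ((1 / lam) * (1 / q.toReal - 1 / p.toReal))) *
        wnorm volume p (fw lam a b) (fun x => φ.eval x) := by
  set e := 1 / q.toReal - 1 / p.toReal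
  obtain ⟨he₀, he₁⟩ : e ∈ Set.Icc 0 1 := one_div_toReal_sub_one_div_toReal_mem_Icc hq hqp.le
  have hm₁ : (1 : ℝ) ≤ m := by exact_mod_cast hm
  have hmθ : 1 ≤ (m : ℝ) ^ ((1 / lam) * e) := Real.one_le_rpow hm₁ (by positivity)
  rcases eq_or_ne (wnorm volume p (fw lam a b) (fun x => φ.eval x)) ∞ with htop | htop
  · rw [htop, ENNReal.mul_top (by simp only [ne_eq, ENNReal.ofReal_eq_zero, not_le]; positivity)]
    exact le_top
  set N := (wnorm volume p (fw lam a b) (fun x => φ.eval x)).toReal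
  have hN : wnorm volume p (fw lam a b) (fun x => φ.eval x) = ENNReal.ofReal N :=
    (ENNReal.ofReal_toReal htop).symm
  set R := (m : ℝ) ^ (1 / lam)
  have hR₁ : 1 ≤ R := one_le_natCast_rpow_one_div (by linarith) hm
  obtain ⟨x₀, hx₀, hmax⟩ := isCompact_Icc.exists_isMaxOn (Set.nonempty_Icc.mpr (by linarith))
    (φ.continuous.abs.continuousOn (s := Set.Icc (-R) R))
  have hMN : |φ.eval x₀| * exp (-a * m + b) ≤ 4 * (16 * exp 1) ^ m * N := by
    have h := ofReal_abs_eval_mul_div_le_eLpNorm hφ (hq.trans hqp.le) hR₁ hx₀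
      (fun x hx => hmax hx) (exp_pos _).le
      fun x hx => exp_neg_mul_add_le_fw (b := b) (by linarith) ha.le hx
    rw [← wnorm, hN, ENNReal.ofReal_le_ofReal_iff ENNReal.toReal_nonneg,
      div_le_iff₀ (by positivity)] at h
    linarith
  have hsplit := eLpNorm_le_of_abs_le_mul_exp_neg_abs (T := D * R)
    ((φ.continuous.mul (continuous_fw (by linarith) a b)).aestronglyMeasurable)
    hq hqp.ne_top hqp.le (by positivity) fun x hx =>
      abs_eval_mul_fw_le_of_le_abs hlam hm hφ hD₁ hD
        (fun y hy => hmax ⟨by linarith [hy.1], hy.2⟩) hMN hx.le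
  have hpow := rpow_two_mul_mul_natCast_rpow_le (lam := lam) (m := m) hD₁ he₁
  calc wnorm volume q (fw lam a b) (fun x => φ.eval x)
      ≤ ENNReal.ofReal ((2 * (D * R)) ^ e) * ENNReal.ofReal N + ENNReal.ofReal (2 * (4 * N)) := by
        rw [← hN]; exact hsplit
    _ ≤ ENNReal.ofReal ((2 * D + 8) * (m : ℝ) ^ ((1 / lam) * e)) * ENNReal.ofReal N := by
        have hN₀ : 0 ≤ N := ENNReal.toReal_nonneg
        rw [← ENNReal.ofReal_mul (by positivity), ← ENNReal.ofReal_add (by positivity)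
          (by positivity), ← ENNReal.ofReal_mul (by positivity)]
        refine ENNReal.ofReal_le_ofReal ?_
        nlinarith [mul_le_mul_of_nonneg_right hpow hN₀]
    _ = _ := by rw [hN]

end Nikolskii

/-- Nikolskii-type inequality for `q < p`. -/
theorem stmt2 (lam a b : ℝ) (hlam : 1 < lam) (ha : 0 < a) (p q : ℝ≥0∞)
    (hq : 1 ≤ q) (hqp : q < p) :
    ∃ C : ℝ, 0 < C ∧ ∀ m : ℕ, 1 ≤ m → ∀ φ : Polynomial ℝ, φ.natDegree ≤ m →
      wnorm volume q (fw lam a b) (fun x => φ.eval x) ≤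
        ENNReal.ofReal (C * (m : ℝ) ^ ((1 / lam) * (1 / q.toReal - 1 / p.toReal))) *
          wnorm volume p (fw lam a b) (fun x => φ.eval x) := by
  obtain ⟨D, hD₁, hD⟩ :=
    exists_forall_log_mul_add_sub_mul_rpow_le (c := 512 * Real.exp 1 ^ 2) hlam ha (by positivity)
  exact ⟨2 * D + 8, by linarith, fun m hm φ hφ =>
    wnorm_le_mul_wnorm_of_natDegree_le hlam ha hq hqp hD₁ hD hm hφ⟩

end
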